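/- If the offspring distribution ν has mean m = 1 and ν(0) > 0, then the Galton–Watson process started from one individual dies out almost surely: P^1(τ = ∞) = 0. -/

import Mathlib

open MeasureTheory ProbabilityTheory Filter
open scoped ENNReal

/-!
Let `F` be the generating function of `ν`. Summing the finite-dimensional distributions over all
paths shows that the law of `Y n` has generating function `F^[n]`, so the process is alive at
time `n` with probability at most `1 - F^[n] 0`. The increasing sequence `F^[n] 0` converges to a
fixed point of `F` in `[0, 1]`. Since the mean is `1` and `ν {0} > 0`, `ν` charges some `k ≥ 2`,
and Bernoulli's inequality `1 + k s ≤ s ^ k + k`, strict for `k ≥ 2` and `s < 1`, integrates to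
`F s > s` for `s < 1`; hence the limit is `1`.
-/

/-- Convolution of two measures on `ℕ`. -/
noncomputable def mconv (μ ν : Measure ℕ) : Measure ℕ :=
  Measure.map (fun p : ℕ × ℕ => p.1 + p.2) (μ.prod ν)

/-- `i`-fold convolution power of a measure on `ℕ`. -/
noncomputable def convPow (ν : Measure ℕ) : ℕ → Measure ℕ
  | 0 => Measure.dirac 0
  | n + 1 => mconv (convPow ν n) ν

/-- Transition probabilities of a Galton–Watson chain. -/
noncomputable def gwStep (ν : Measure ℕ) (i j : ℕ) : ℝ≥0∞ :=
  if i = 0 then (if j = 0 then 1 else 0) else convPow ν i {j}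

/-- `(Y n)` is a Galton–Watson process under `P` with offspring distribution `ν`
and initial distribution `μ0`, characterized by its finite-dimensional
distributions. -/
def IsGW {Ω : Type*} [MeasurableSpace Ω] (P : Measure Ω)
    (Y : ℕ → Ω → ℕ) (ν μ0 : Measure ℕ) : Prop :=
  Measure.map (Y 0) P = μ0 ∧
  ∀ n : ℕ, ∀ a : ℕ → ℕ,
    P {ω | ∀ k ≤ n, Y k ω = a k} =
      μ0 {a 0} * ∏ k ∈ Finset.range n, gwStep ν (a k) (a (k + 1))

section PathSum

variable {α : Type*} (μ₀ : α → ℝ≥0∞) (K : α → α → ℝ≥0∞)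

noncomputable def pathWeight (n : ℕ) (v : Fin (n + 1) → α) : ℝ≥0∞ :=
  μ₀ (v 0) * ∏ k : Fin n, K (v k.castSucc) (v k.succ)

noncomputable def marginal : ℕ → α → ℝ≥0∞
  | 0 => μ₀
  | n + 1 => fun j => ∑' i, marginal n i * K i j

lemma pathWeight_snoc (n : ℕ) (v : Fin (n + 1) → α) (x : α) :
    pathWeight μ₀ K (n + 1) (Fin.snoc v x) = pathWeight μ₀ K n v * K (v (Fin.last n)) x := by
  simp only [pathWeight, Fin.prod_univ_castSucc, Fin.succ_last, Fin.snoc_last, Fin.snoc_castSucc,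
    Fin.succ_castSucc, mul_assoc]
  rw [show (0 : Fin (n + 2)) = Fin.castSucc 0 from rfl, Fin.snoc_castSucc]

lemma tsum_pathWeight_mul (n : ℕ) (g : α → ℝ≥0∞) :
    ∑' v, pathWeight μ₀ K n v * g (v (Fin.last n)) = ∑' j, marginal μ₀ K n j * g j := by
  induction n generalizing g with
  | zero =>
    rw [← (Equiv.funUnique (Fin 1) α).symm.tsum_eq]
    simp [pathWeight, marginal]
  | succ n ih =>
    have hsnoc (p : α × (Fin (n + 1) → α)) : (Fin.snocEquiv fun _ => α) p = Fin.snoc p.2 p.1 :=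
      rfl
    rw [← (Fin.snocEquiv fun _ => α).tsum_eq, ENNReal.tsum_prod', ENNReal.tsum_comm]
    simp only [hsnoc, pathWeight_snoc, Fin.snoc_last, mul_assoc, ENNReal.tsum_mul_left]
    rw [ih fun i => ∑' x, K i x * g x]
    simp only [marginal, ← ENNReal.tsum_mul_right, ← ENNReal.tsum_mul_left, mul_assoc]
    exact ENNReal.tsum_comm

end PathSum

lemma gwStep_eq_convPow (ν : Measure ℕ) (i j : ℕ) : gwStep ν i j = convPow ν i {j} := by
  rcases eq_or_ne i 0 with rfl | hi
  · by_cases hj : j = 0 <;> simp [gwStep, convPow, hj, Measure.dirac_apply', Set.indicator, eq_comm]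
  · simp [gwStep, hi]

noncomputable def pgf (μ : Measure ℕ) (s : ℝ≥0∞) : ℝ≥0∞ := ∫⁻ k, s ^ k ∂μ

lemma pgf_eq_tsum (μ : Measure ℕ) (s : ℝ≥0∞) : pgf μ s = ∑' k, μ {k} * s ^ k := by
  simp_rw [pgf, lintegral_countable', mul_comm]

lemma pgf_one (μ : Measure ℕ) [IsProbabilityMeasure μ] : pgf μ 1 = 1 := by
  simp [pgf]

lemma pgf_dirac (n : ℕ) (s : ℝ≥0∞) : pgf (Measure.dirac n) s = s ^ n :=
  lintegral_dirac n _

lemma pgf_mconv (μ ρ : Measure ℕ) (s : ℝ≥0∞) : pgf (mconv μ ρ) s = pgf μ s * pgf ρ s := by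
  rw [pgf, mconv, lintegral_map (measurable_of_countable _) (measurable_of_countable _),
    lintegral_prod _ (measurable_of_countable _).aemeasurable]
  simp_rw [pow_add]
  exact lintegral_lintegral_mul (measurable_of_countable _).aemeasurable
    (measurable_of_countable _).aemeasurable

lemma pgf_convPow (ν : Measure ℕ) (i : ℕ) (s : ℝ≥0∞) : pgf (convPow ν i) s = pgf ν s ^ i := by
  induction i with
  | zero => simp [convPow, pgf_dirac]
  | succ i ih => rw [convPow, pgf_mconv, ih, pow_succ]

lemma monotone_pgf (μ : Measure ℕ) : Monotone (pgf μ) :=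
  fun _ _ h => lintegral_mono fun k => pow_le_pow_left' h k

lemma pgf_iSup (μ : Measure ℕ) {t : ℕ → ℝ≥0∞} (ht : Monotone t) :
    pgf μ (⨆ n, t n) = ⨆ n, pgf μ (t n) := by
  simp_rw [pgf, ENNReal.iSup_pow]
  exact lintegral_iSup (fun _ => measurable_of_countable _) fun _ _ h k => pow_le_pow_left' (ht h) k

lemma tsum_marginal_gwStep_mul_pow (ν μ₀ : Measure ℕ) (n : ℕ) (s : ℝ≥0∞) :
    ∑' j, marginal (fun i => μ₀ {i}) (gwStep ν) n j * s ^ j = pgf μ₀ ((pgf ν)^[n] s) := by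
  induction n generalizing s with
  | zero => exact (pgf_eq_tsum μ₀ s).symm
  | succ n ih =>
    calc ∑' j, marginal (fun i => μ₀ {i}) (gwStep ν) (n + 1) j * s ^ j
        = ∑' i, marginal (fun i => μ₀ {i}) (gwStep ν) n i * pgf ν s ^ i := by
          simp_rw [← pgf_convPow, pgf_eq_tsum, marginal, ← ENNReal.tsum_mul_right,
            ← ENNReal.tsum_mul_left, gwStep_eq_convPow, mul_assoc]
          exact ENNReal.tsum_comm
      _ = pgf μ₀ ((pgf ν)^[n + 1] s) := by rw [ih, Function.iterate_succ_apply]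

section GaltonWatson

variable {Ω : Type*} [MeasurableSpace Ω] {P : Measure Ω} {Y : ℕ → Ω → ℕ} {ν μ₀ : Measure ℕ}

lemma IsGW.measure_cylinder (hY : IsGW P Y ν μ₀) (n : ℕ) (v : Fin (n + 1) → ℕ) :
    P {ω | ∀ k : Fin (n + 1), Y k ω = v k} = pathWeight (fun i => μ₀ {i}) (gwStep ν) n v := by
  have hclamp (k : ℕ) (hk : k < n + 1) : Fin.clamp k n = ⟨k, hk⟩ :=
    Fin.ext (min_eq_left (Nat.lt_succ_iff.1 hk))
  have hset : {ω | ∀ k : Fin (n + 1), Y k ω = v k} =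
      {ω | ∀ k ≤ n, Y k ω = v (Fin.clamp k n)} := by
    ext ω
    refine ⟨fun h k hk => ?_, fun h k => ?_⟩
    · rw [hclamp k (Nat.lt_succ_of_le hk)]
      exact h ⟨k, _⟩
    · rw [h k (Nat.lt_succ_iff.1 k.2), hclamp]
  rw [hset, hY.2, pathWeight, ← Fin.prod_univ_eq_prod_range]
  congr 1
  refine Finset.prod_congr rfl fun i _ => ?_
  rw [hclamp i (by omega), hclamp (i + 1) (by omega)]
  rfl

lemma IsGW.measure_mem_le (hY : IsGW P Y ν μ₀) (n : ℕ) (S : Set ℕ) :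
    P {ω | Y n ω ∈ S} ≤ ∑' j, S.indicator (marginal (fun i => μ₀ {i}) (gwStep ν) n) j := by
  -- `Y` is not assumed measurable, so only subadditivity over the cylinders is available.
  calc P {ω | Y n ω ∈ S}
      ≤ P (⋃ v : Fin (n + 1) → ℕ, {ω | ∀ k : Fin (n + 1), Y k ω = v k} ∩ {ω | Y n ω ∈ S}) :=
        measure_mono fun ω hω => Set.mem_iUnion.2 ⟨fun k => Y k ω, fun _ => rfl, hω⟩
    _ ≤ ∑' v : Fin (n + 1) → ℕ, P ({ω | ∀ k : Fin (n + 1), Y k ω = v k} ∩ {ω | Y n ω ∈ S}) :=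
        measure_iUnion_le _
    _ ≤ ∑' v, pathWeight (fun i => μ₀ {i}) (gwStep ν) n v * S.indicator 1 (v (Fin.last n)) := by
        refine ENNReal.tsum_le_tsum fun v => ?_
        by_cases hv : v (Fin.last n) ∈ S
        · simpa [hv] using (measure_mono Set.inter_subset_left).trans_eq (hY.measure_cylinder n v)
        · refine le_of_eq_of_le (measure_mono_null (fun ω hω => hv ?_) measure_empty) zero_le
          simpa [← hω.1 (Fin.last n)] using hω.2
    _ = _ := by
        rw [tsum_pathWeight_mul]
        congr with j
        by_cases hj : j ∈ S <;> simp [hj]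

lemma IsGW.measure_ne_zero_le [IsProbabilityMeasure ν] [IsProbabilityMeasure μ₀]
    (hY : IsGW P Y ν μ₀) (n : ℕ) :
    P {ω | Y n ω ≠ 0} ≤ 1 - pgf μ₀ ((pgf ν)^[n] 0) := by
  set m := marginal (fun i => μ₀ {i}) (gwStep ν) n
  have hmass : ∑' j, m j = 1 := by
    simpa [Function.iterate_fixed (pgf_one ν), pgf_one] using tsum_marginal_gwStep_mul_pow ν μ₀ n 1
  have hzero : m 0 = pgf μ₀ ((pgf ν)^[n] 0) := by
    rw [← tsum_marginal_gwStep_mul_pow, tsum_eq_single 0 fun j hj => by simp [hj]]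
    simp [m]
  have hsplit : ∑' j, m j = m 0 + ∑' j, ({0}ᶜ : Set ℕ).indicator m j := by
    rw [ENNReal.tsum_eq_add_tsum_ite 0]
    congr with j
    by_cases hj : j = 0 <;> simp [hj]
  calc P {ω | Y n ω ≠ 0} ≤ ∑' j, ({0}ᶜ : Set ℕ).indicator m j := hY.measure_mem_le n {0}ᶜ
    _ = 1 - m 0 := by
      rw [← hmass, hsplit, ENNReal.add_sub_cancel_left]
      exact ne_top_of_le_ne_top ENNReal.one_ne_top (hmass ▸ ENNReal.le_tsum 0)
    _ = 1 - pgf μ₀ ((pgf ν)^[n] 0) := by rw [hzero]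

end GaltonWatson

lemma ENNReal.one_add_mul_le_pow_add {s : ℝ≥0∞} (hs : s ≠ ∞) (k : ℕ) :
    1 + k * s ≤ s ^ k + k := by
  lift s to NNReal using hs
  have h : (1 : ℝ) + k * s ≤ s ^ k + k := by
    nlinarith [one_add_mul_sub_le_pow (show (-1 : ℝ) ≤ s by linarith [s.2]) k]
  exact_mod_cast h

lemma ENNReal.one_add_mul_lt_pow_add {s : ℝ≥0∞} (hs : s < 1) {k : ℕ} (hk : 2 ≤ k) :
    1 + k * s < s ^ k + k := by
  lift s to NNReal using hs.ne_top
  have hs1 : (s : ℝ) < 1 := by exact_mod_cast hs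
  -- `s ^ k + k - 1 - k * s` is positive at `k = 2` and grows by `(1 - s) * (1 - s ^ k)`.
  have h : (1 : ℝ) + k * s < s ^ k + k := by
    induction k, hk using Nat.le_induction with
    | base =>
      push_cast
      nlinarith [_root_.mul_pos (sub_pos.2 hs1) (sub_pos.2 hs1)]
    | succ k _ ih =>
      have hpow : (s : ℝ) ^ k ≤ 1 := pow_le_one₀ s.2 hs1.le
      push_cast
      rw [pow_succ]
      nlinarith [mul_nonneg (sub_nonneg.2 hs1.le) (sub_nonneg.2 hpow)]
  exact_mod_cast h

lemma exists_two_le_measure_singleton_ne_zero {ν : Measure ℕ} [IsProbabilityMeasure ν]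
    (hm : ∑' k : ℕ, (k : ℝ≥0∞) * ν {k} = 1) (h0 : 0 < ν {0}) :
    ∃ k, 2 ≤ k ∧ ν {k} ≠ 0 := by
  by_contra! h
  have h1 : ν {1} = 1 := by
    rw [← hm, tsum_eq_single 1 fun k hk => ?_]
    · simp
    · rcases Nat.lt_or_ge k 2 with hk2 | hk2
      · interval_cases k <;> simp_all
      · simp [h k hk2]
  have hpair : ν {0} + ν {1} ≤ 1 := by
    rw [← measure_union (by simp) (measurableSet_singleton 1)]
    exact prob_le_one
  rw [h1, add_comm] at hpair
  exact (ENNReal.lt_add_right ENNReal.one_ne_top h0.ne').not_ge hpair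

lemma lt_pgf {ν : Measure ℕ} [IsProbabilityMeasure ν]
    (hm : ∑' k : ℕ, (k : ℝ≥0∞) * ν {k} = 1) (h0 : 0 < ν {0}) {s : ℝ≥0∞} (hs : s < 1) :
    s < pgf ν s := by
  obtain ⟨k, hk, hνk⟩ := exists_two_le_measure_singleton_ne_zero hm h0
  have hmass : ∑' k, ν {k} = 1 := by simpa using (pgf_eq_tsum ν 1).symm.trans (pgf_one ν)
  have hlower : ∑' k : ℕ, ν {k} * (1 + k * s) = 1 + s := by
    have hterm (j : ℕ) : ν {j} * (1 + j * s) = ν {j} + j * ν {j} * s := by ring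
    simp_rw [hterm, ENNReal.tsum_add, ENNReal.tsum_mul_right, hmass, hm, one_mul]
  have hupper : ∑' k : ℕ, ν {k} * (s ^ k + k) = pgf ν s + 1 := by
    have hterm (j : ℕ) : ν {j} * (s ^ j + j) = ν {j} * s ^ j + j * ν {j} := by ring
    simp_rw [hterm, ENNReal.tsum_add, ← pgf_eq_tsum, hm]
  have hlt : 1 + s < pgf ν s + 1 := by
    rw [← hlower, ← hupper]
    refine ENNReal.tsum_lt_tsum (i := k) (by simp [hlower, hs.ne_top])
      (fun j => mul_le_mul_right (ENNReal.one_add_mul_le_pow_add hs.ne_top j) _) ?_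
    exact ENNReal.mul_lt_mul_right hνk (measure_ne_top ν _) (ENNReal.one_add_mul_lt_pow_add hs hk)
  rw [add_comm] at hlt
  exact (ENNReal.add_lt_add_iff_right ENNReal.one_ne_top).1 hlt

lemma iSup_iterate_pgf_zero {ν : Measure ℕ} [IsProbabilityMeasure ν]
    (hm : ∑' k : ℕ, (k : ℝ≥0∞) * ν {k} = 1) (h0 : 0 < ν {0}) :
    ⨆ n, (pgf ν)^[n] 0 = 1 := by
  have hmono : Monotone fun n => (pgf ν)^[n] 0 :=
    (monotone_pgf ν).monotone_iterate_of_le_map zero_le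
  have hle : ⨆ n, (pgf ν)^[n] 0 ≤ 1 := iSup_le fun n =>
    ((monotone_pgf ν).iterate n zero_le).trans (Function.iterate_fixed (pgf_one ν) n).le
  have hfix : pgf ν (⨆ n, (pgf ν)^[n] 0) ≤ ⨆ n, (pgf ν)^[n] 0 := by
    rw [pgf_iSup ν hmono]
    exact iSup_le fun n => by
      simpa [← Function.iterate_succ_apply'] using le_iSup (fun n => (pgf ν)^[n] 0) (n + 1)
  by_contra hne
  exact (lt_pgf hm h0 (lt_of_le_of_ne hle hne)).not_ge hfix

theorem gw_critical_extinction_general {Ω : Type*} [MeasurableSpace Ω]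
    (P : Measure Ω)
    (ν : Measure ℕ) [IsProbabilityMeasure ν]
    (hm : ∑' k : ℕ, (k : ℝ≥0∞) * ν {k} = 1) (h0 : 0 < ν {0})
    (Y : ℕ → Ω → ℕ) (hY : IsGW P Y ν (Measure.dirac 1)) :
    P {ω | ∀ t : ℕ, Y t ω ≠ 0} = 0 := by
  have hbound (n : ℕ) : P {ω | ∀ t : ℕ, Y t ω ≠ 0} ≤ 1 - (pgf ν)^[n] 0 := by
    have hsub : {ω | ∀ t : ℕ, Y t ω ≠ 0} ⊆ {ω | Y n ω ≠ 0} := fun ω hω => hω n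
    simpa [pgf_dirac] using (measure_mono hsub).trans (hY.measure_ne_zero_le n)
  have hinf := le_iInf hbound
  rwa [← ENNReal.sub_iSup ENNReal.one_ne_top, iSup_iterate_pgf_zero hm h0, tsub_self,
    nonpos_iff_eq_zero] at hinf

/-- Critical Galton–Watson processes with `ν {0} > 0` die out almost surely. -/
theorem gw_critical_extinction {Ω : Type*} [MeasurableSpace Ω]
    (P : Measure Ω) [IsProbabilityMeasure P]
    (ν : Measure ℕ) [IsProbabilityMeasure ν]
    (hm : ∑' k : ℕ, (k : ℝ≥0∞) * ν {k} = 1) (h0 : 0 < ν {0})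
    (Y : ℕ → Ω → ℕ) (hY : IsGW P Y ν (Measure.dirac 1)) :
    P {ω | ∀ t : ℕ, Y t ω ≠ 0} = 0 :=
  gw_critical_extinction_general P ν hm h0 Y hY
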